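/- For any real number a and any ε ≥ 0, exp(-2·max(0, |a| - ε)) = (∫₀^∞ (1/√(2πγ)) exp(-(γ + a - ε)²/(2γ)) dγ) · (∫₀^∞ (1/√(2πω)) exp(-(ω - a - ε)²/(2ω)) dω). -/

import Mathlib

/-! Substituting `γ = u ^ 2` turns each factor into `(2 / √(2π)) ∫₀^∞ exp (-(u + t / u) ^ 2 / 2) du`
with `t = ±a - ε`. As `(u + t / u) ^ 2 = (u - t / u) ^ 2 + 4 t`, this reduces to the
Cauchy–Schlömilch integral `∫₀^∞ exp (-(u - s / u) ^ 2 / 2) du = √(2π) / 2` for `s ≥ 0`, obtained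
from the substitutions `v = u - s / u` and `u ↦ s / u`. Hence each factor is `exp (-2 max 0 t)`,
and since `ε ≥ 0` at most one of `max 0 (a - ε)`, `max 0 (-a - ε)` is nonzero. -/

open MeasureTheory Real Set

lemma hasDerivAt_const_div (s : ℝ) {u : ℝ} (hu : u ≠ 0) :
    HasDerivAt (fun u : ℝ => s / u) (-(s / u ^ 2)) u :=
  ((hasDerivAt_const u s).div (hasDerivAt_id' u) hu).congr_deriv (by ring)

lemma hasDerivAt_sub_div (s : ℝ) {u : ℝ} (hu : u ≠ 0) :
    HasDerivAt (fun u : ℝ => u - s / u) (1 + s / u ^ 2) u :=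
  ((hasDerivAt_id' u).sub (hasDerivAt_const_div s hu)).congr_deriv (by ring)

lemma injOn_sub_div {s : ℝ} (hs : 0 ≤ s) : InjOn (fun u : ℝ => u - s / u) (Ioi 0) := by
  intro x (hx : 0 < x) y (hy : 0 < y) h
  have hxy : (x - y) * (x * y + s) = 0 := by
    field_simp at h
    linear_combination h
  have : 0 < x * y + s := by positivity
  linarith [(mul_eq_zero.1 hxy).resolve_right this.ne']

lemma image_sub_div_Ioi {s : ℝ} (hs : 0 < s) : (fun u : ℝ => u - s / u) '' Ioi 0 = univ := by
  refine eq_univ_of_forall fun v => ?_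
  -- the positive root of `u ^ 2 - v * u - s = 0`
  have hd : 0 < v ^ 2 + 4 * s := by positivity
  have hr : √(v ^ 2 + 4 * s) ^ 2 = v ^ 2 + 4 * s := sq_sqrt hd.le
  have hv : |v| < √(v ^ 2 + 4 * s) := by
    rw [← sqrt_sq_eq_abs]
    exact sqrt_lt_sqrt (sq_nonneg v) (by linarith)
  have hvr : 0 < v + √(v ^ 2 + 4 * s) := by linarith [neg_abs_le v]
  refine ⟨(v + √(v ^ 2 + 4 * s)) / 2, half_pos hvr, ?_⟩
  field_simp
  linear_combination hr

lemma injOn_const_div {s : ℝ} (hs : s ≠ 0) : InjOn (fun u : ℝ => s / u) (Ioi 0) := by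
  intro x (hx : 0 < x) y (hy : 0 < y) h
  field_simp at h
  exact h.symm

lemma image_const_div_Ioi {s : ℝ} (hs : 0 < s) : (fun u : ℝ => s / u) '' Ioi 0 = Ioi 0 :=
  Subset.antisymm (image_subset_iff.2 fun _ hu => div_pos hs hu)
    fun x (hx : 0 < x) => ⟨s / x, div_pos hs hx, by field_simp⟩

theorem integral_Ioi_comp_sub_div_of_even {E : Type*} [NormedAddCommGroup E] [NormedSpace ℝ E]
    {g : ℝ → E} (hg : Integrable g)
    (hg_even : ∀ x, g (-x) = g x) {s : ℝ} (hs : 0 < s) :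
    ∫ u in Ioi 0, g (u - s / u) = (2 : ℝ)⁻¹ • ∫ x, g x := by
  set I := ∫ u in Ioi 0, g (u - s / u)
  have hφ : ∀ u ∈ Ioi (0 : ℝ), HasDerivWithinAt (fun u => u - s / u) (1 + s / u ^ 2) (Ioi 0) u :=
    fun u hu => (hasDerivAt_sub_div s (ne_of_gt hu)).hasDerivWithinAt
  have hψ : ∀ u ∈ Ioi (0 : ℝ), HasDerivWithinAt (fun u => s / u) (-(s / u ^ 2)) (Ioi 0) u :=
    fun u hu => (hasDerivAt_const_div s (ne_of_gt hu)).hasDerivWithinAt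
  have hw (u : ℝ) : 1 ≤ 1 + s / u ^ 2 := le_add_of_nonneg_right (by positivity)
  have hfull : ∫ x, g x = ∫ u in Ioi 0, (1 + s / u ^ 2) • g (u - s / u) := by
    have := integral_image_eq_integral_abs_deriv_smul measurableSet_Ioi hφ (injOn_sub_div hs.le) g
    rw [image_sub_div_Ioi hs, setIntegral_univ] at this
    simpa only [abs_of_pos (zero_lt_one.trans_le (hw _))] using this
  -- `u ↦ s / u` maps `u - s / u` to its negative, and `g` is even
  have hreflect : I = ∫ u in Ioi 0, (s / u ^ 2) • g (u - s / u) := by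
    have := integral_image_eq_integral_abs_deriv_smul measurableSet_Ioi hψ (injOn_const_div hs.ne')
      (fun x => g (x - s / x))
    rw [image_const_div_Ioi hs] at this
    refine this.trans (setIntegral_congr_fun measurableSet_Ioi fun u (hu : 0 < u) => ?_)
    have : s / u - s / (s / u) = -(u - s / u) := by field_simp; ring
    simp only [this, hg_even, abs_neg, abs_of_nonneg (div_nonneg hs.le (sq_nonneg u))]
  have hF : IntegrableOn (fun u => (1 + s / u ^ 2) • g (u - s / u)) (Ioi 0) := by
    have := (integrableOn_image_iff_integrableOn_abs_deriv_smul measurableSet_Ioi hφ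
      (injOn_sub_div hs.le) g).1 (by rw [image_sub_div_Ioi hs]; exact hg.integrableOn)
    simpa only [abs_of_pos (zero_lt_one.trans_le (hw _))] using this
  have hI : IntegrableOn (fun u => g (u - s / u)) (Ioi 0) := by
    have := hF.bdd_smul 1 (φ := fun u => (1 + s / u ^ 2)⁻¹)
      (by fun_prop : Measurable fun u : ℝ => (1 + s / u ^ 2)⁻¹).aestronglyMeasurable
      (ae_of_all _ fun u => ?_)
    · refine IntegrableOn.congr_fun this (fun u _ => ?_) measurableSet_Ioi
      exact inv_smul_smul₀ (zero_lt_one.trans_le (hw u)).ne' _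
    · rw [norm_inv, Real.norm_of_nonneg (zero_le_one.trans (hw u))]
      exact inv_le_one_of_one_le₀ (hw u)
  have hJ : IntegrableOn (fun u => (s / u ^ 2) • g (u - s / u)) (Ioi 0) :=
    (hF.sub hI).congr_fun (fun u _ => by simp only [Pi.sub_apply, add_smul, one_smul,
      add_sub_cancel_left]) measurableSet_Ioi
  have hsum : I + I = ∫ x, g x := by
    nth_rewrite 2 [hreflect]
    rw [hfull, ← integral_add hI hJ]
    refine setIntegral_congr_fun measurableSet_Ioi fun u _ => ?_
    simp only [add_smul, one_smul]
  rw [← hsum, ← two_smul ℝ I, inv_smul_smul₀ two_ne_zero]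

lemma max_zero_abs_sub_eq_add {α : Type*} [AddCommGroup α] [LinearOrder α] [IsOrderedAddMonoid α]
    (a : α) {ε : α} (hε : 0 ≤ ε) : max 0 (|a| - ε) = max 0 (a - ε) + max 0 (-a - ε) := by
  rcases le_total 0 a with ha | ha
  · rw [abs_of_nonneg ha, max_eq_left (a := 0) (b := -a - ε) (by
      rw [sub_nonpos]; exact (neg_nonpos.2 ha).trans hε), add_zero]
  · rw [abs_of_nonpos ha, max_eq_left (a := 0) (b := a - ε) (by
      rw [sub_nonpos]; exact ha.trans hε), zero_add]

lemma integral_Ioi_exp_neg_sq_sub_div {s : ℝ} (hs : 0 ≤ s) :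
    ∫ u in Ioi 0, exp (-(u - s / u) ^ 2 / 2) = √(2 * π) / 2 := by
  have hg : ∀ x : ℝ, exp (-x ^ 2 / 2) = exp (-(1 / 2) * x ^ 2) := fun x => by ring_nf
  have hπ : √(π / (1 / 2)) = √(2 * π) := by ring_nf
  rcases hs.eq_or_lt with rfl | hs
  · simp only [zero_div, sub_zero, hg, integral_gaussian_Ioi, hπ]
  · have hint : Integrable fun x : ℝ => exp (-x ^ 2 / 2) := by
      simpa only [hg] using integrable_exp_neg_mul_sq (by norm_num : (0 : ℝ) < 1 / 2)
    refine (integral_Ioi_comp_sub_div_of_even hint (fun x => by rw [neg_sq]) hs).trans ?_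
    simp only [hg, integral_gaussian, smul_eq_mul, hπ]
    ring

lemma integral_Ioi_exp_neg_sq_add_div (t : ℝ) :
    ∫ u in Ioi 0, exp (-(u + t / u) ^ 2 / 2) = √(2 * π) / 2 * exp (-2 * max 0 t) := by
  rcases le_or_gt t 0 with ht | ht
  · simp only [max_eq_left ht, mul_zero, exp_zero, mul_one]
    simpa only [neg_div, sub_neg_eq_add] using integral_Ioi_exp_neg_sq_sub_div (neg_nonneg.2 ht)
  · rw [max_eq_right ht.le, ← integral_Ioi_exp_neg_sq_sub_div ht.le, ← integral_mul_const]
    refine setIntegral_congr_fun measurableSet_Ioi fun u (hu : 0 < u) => ?_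
    rw [← exp_add]
    congr 1
    field_simp
    ring

theorem integral_Ioi_gaussian_scale_mixture (t : ℝ) :
    ∫ γ in Ioi 0, 1 / √(2 * π * γ) * exp (-(γ + t) ^ 2 / (2 * γ)) = exp (-2 * max 0 t) := by
  rw [← integral_comp_rpow_Ioi_of_pos (p := 2)
    (g := fun γ => 1 / √(2 * π * γ) * exp (-(γ + t) ^ 2 / (2 * γ))) two_pos]
  have hsub : ∀ u ∈ Ioi (0 : ℝ), (2 * u ^ ((2 : ℝ) - 1)) •
      (1 / √(2 * π * u ^ (2 : ℝ)) * exp (-(u ^ (2 : ℝ) + t) ^ 2 / (2 * u ^ (2 : ℝ))))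
      = 2 / √(2 * π) * exp (-(u + t / u) ^ 2 / 2) := by
    intro u (hu : 0 < u)
    rw [rpow_two, show (2 : ℝ) - 1 = 1 by norm_num, rpow_one, smul_eq_mul,
      sqrt_mul (by positivity), sqrt_sq hu.le]
    have : 0 < √(2 * π) := by positivity
    field_simp
  rw [setIntegral_congr_fun measurableSet_Ioi hsub, integral_const_mul,
    integral_Ioi_exp_neg_sq_add_div]
  have : 0 < √(2 * π) := by positivity
  field_simp

theorem eps_insensitive_double_scale_mixture (a ε : ℝ) (hε : 0 ≤ ε) :
    Real.exp (-2 * max 0 (|a| - ε)) =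
      (∫ γ in Set.Ioi (0:ℝ),
        (1 / Real.sqrt (2 * Real.pi * γ)) * Real.exp (-(γ + a - ε)^2 / (2 * γ))) *
      (∫ ω in Set.Ioi (0:ℝ),
        (1 / Real.sqrt (2 * Real.pi * ω)) * Real.exp (-(ω - a - ε)^2 / (2 * ω))) := by
  have hγ (γ : ℝ) : γ + a - ε = γ + (a - ε) := add_sub_assoc γ a ε
  have hω (ω : ℝ) : ω - a - ε = ω + (-a - ε) := by ring
  simp only [hγ, hω, integral_Ioi_gaussian_scale_mixture, ← exp_add,
    max_zero_abs_sub_eq_add a hε, mul_add]
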